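/- Let 𝒢 be a grounded degree sandwich monotone class of finite simple graphs and let (G, ω) be a weighted graph. Then (G, ω) is level-𝒢 if and only if G ∈ 𝒢 and every degree-minimal edge elimination scheme of (G, ω) is a sorted 𝒢-safe edge elimination scheme. -/

import Mathlib

open SimpleGraph

variable {V : Type*}

/-- The degree of a vertex `v` in the graph `G`. -/
noncomputable def deg (G : SimpleGraph V) (v : V) : ℕ := (G.neighborSet v).ncard

/-- The edge `uv ∈ F` is degree-minimal in `F`: `u` has the smallest degree in `G` among all
vertices incident to an edge of `F`, and the degree of `v` in `G` is smallest among all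
neighbors of `u` joined to `u` by an edge of `F`. -/
def DegreeMinimal (G : SimpleGraph V) (F : Set (Sym2 V)) (u v : V) : Prop :=
  s(u, v) ∈ F ∧
  (∀ x y : V, s(x, y) ∈ F → deg G u ≤ deg G x) ∧
  (∀ z : V, s(u, z) ∈ F → deg G v ≤ deg G z)

/-- An edge ordering of `G`: a duplicate-free list containing exactly the edges of `G`. -/
def IsEdgeOrdering (G : SimpleGraph V) (l : List (Sym2 V)) : Prop :=
  l.Nodup ∧ ∀ e : Sym2 V, e ∈ l ↔ e ∈ G.edgeSet

/-- `G^i_τ`: the spanning subgraph of `G` obtained by removing the first `i` edges of `τ`. -/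
def schemeGraph (G : SimpleGraph V) (l : List (Sym2 V)) (i : ℕ) : SimpleGraph V :=
  G.deleteEdges {e | e ∈ l.take i}

/-- A `𝒢`-safe edge elimination scheme of `G`: an edge ordering such that each `G^i_τ` is
in `𝒢`. -/
def IsSafeScheme (𝒢 : SimpleGraph V → Prop) (G : SimpleGraph V) (l : List (Sym2 V)) : Prop :=
  IsEdgeOrdering G l ∧ ∀ i : ℕ, 1 ≤ i → i ≤ l.length → 𝒢 (schemeGraph G l i)

/-- The edge ordering is sorted: weights are non-decreasing along the ordering. -/
def IsSorted (ω : Sym2 V → ℕ) (l : List (Sym2 V)) : Prop :=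
  l.Pairwise fun a b => ω a ≤ ω b

/-- `(G, ω)` is a `k`-weighted graph: every edge has weight in `{1, …, k}` and every value in
`{1, …, k}` is attained by some edge. -/
def IsWeighting (G : SimpleGraph V) (ω : Sym2 V → ℕ) (k : ℕ) : Prop :=
  (∀ e ∈ G.edgeSet, 1 ≤ ω e ∧ ω e ≤ k) ∧
  (∀ j : ℕ, 1 ≤ j → j ≤ k → ∃ e ∈ G.edgeSet, ω e = j)

/-- The `i`-th level graph of `(G, ω)`: remove all edges of weight `< i`. -/
def levelGraph (G : SimpleGraph V) (ω : Sym2 V → ℕ) (i : ℕ) : SimpleGraph V :=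
  G.deleteEdges {e | ω e < i}

/-- `(G, ω)` is level-`𝒢`: all of its level graphs belong to `𝒢`. -/
def IsLevel (𝒢 : SimpleGraph V → Prop) (G : SimpleGraph V) (ω : Sym2 V → ℕ) (k : ℕ) : Prop :=
  ∀ i : ℕ, 1 ≤ i → i ≤ k + 1 → 𝒢 (levelGraph G ω i)

/-- A graph class `𝒢` is degree sandwich monotone if for each `G ∈ 𝒢` and each `𝒢`-safe set
`F ⊆ E(G)`, every degree-minimal edge in `F` is `𝒢`-safe. -/
def DegreeSandwichMonotone (𝒢 : SimpleGraph V → Prop) : Prop :=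
  ∀ G : SimpleGraph V, 𝒢 G → ∀ F : Set (Sym2 V), F ⊆ G.edgeSet →
    𝒢 (G.deleteEdges F) →
    ∀ u v : V, DegreeMinimal G F u v → 𝒢 (G.deleteEdges {s(u, v)})

/-- A graph class `𝒢` is grounded if for every `G ∈ 𝒢` the whole edge set of `G` is
`𝒢`-safe. -/
def Grounded (𝒢 : SimpleGraph V → Prop) : Prop :=
  ∀ G : SimpleGraph V, 𝒢 G → 𝒢 (G.deleteEdges G.edgeSet)

/-- The set of minimum-weight edges of `G` (with respect to `ω`). -/
def minWeightEdges (G : SimpleGraph V) (ω : Sym2 V → ℕ) : Set (Sym2 V) :=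
  {e | e ∈ G.edgeSet ∧ ∀ f ∈ G.edgeSet, ω e ≤ ω f}

/-- The (unordered) edge `e` is degree-minimal in `F`. -/
def Sym2DegreeMinimal (G : SimpleGraph V) (F : Set (Sym2 V)) (e : Sym2 V) : Prop :=
  ∃ u v : V, e = s(u, v) ∧ DegreeMinimal G F u v

/-- A degree-minimal edge elimination scheme of `(G, ω)`: an edge ordering such that every
edge `e_i` is degree-minimal in the set of all minimum-weight edges of `G^{i-1}_τ`. -/
def IsDegMinScheme (G : SimpleGraph V) (ω : Sym2 V → ℕ) (l : List (Sym2 V)) : Prop :=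
  IsEdgeOrdering G l ∧ ∀ (i : ℕ) (h : i < l.length),
    Sym2DegreeMinimal (schemeGraph G l i) (minWeightEdges (schemeGraph G l i) ω) (l.get ⟨i, h⟩)


section Aux

variable {𝒢 : SimpleGraph V → Prop} {G H : SimpleGraph V} {ω : Sym2 V → ℕ} {k : ℕ}

lemma deleteEdges_congr' (G : SimpleGraph V) {s t : Set (Sym2 V)}
    (h : ∀ e ∈ G.edgeSet, (e ∈ s ↔ e ∈ t)) : G.deleteEdges s = G.deleteEdges t := by
  ext v w
  simp only [deleteEdges_adj]
  constructor
  · rintro ⟨ha, hs⟩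
    exact ⟨ha, fun ht => hs ((h _ (G.mem_edgeSet.2 ha)).2 ht)⟩
  · rintro ⟨ha, ht⟩
    exact ⟨ha, fun hs => ht ((h _ (G.mem_edgeSet.2 ha)).1 hs)⟩

lemma schemeGraph_zero (G : SimpleGraph V) (l : List (Sym2 V)) : schemeGraph G l 0 = G := by
  unfold schemeGraph
  rw [deleteEdges_congr' G (t := ∅) (by simp)]
  exact deleteEdges_empty

lemma schemeGraph_succ (G : SimpleGraph V) (l : List (Sym2 V)) {i : ℕ} (h : i < l.length) :
    schemeGraph G l (i + 1) = (schemeGraph G l i).deleteEdges {l.get ⟨i, h⟩} := by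
  ext v w
  simp only [schemeGraph, deleteEdges_adj, Set.mem_setOf_eq, List.take_succ,
    List.mem_append, Set.mem_singleton_iff, List.getElem?_eq_getElem h, Option.toList_some,
    List.mem_singleton, List.get_eq_getElem]
  tauto

lemma schemeGraph_cons (G : SimpleGraph V) (e : Sym2 V) (l : List (Sym2 V)) (i : ℕ) :
    schemeGraph G (e :: l) (i + 1) = schemeGraph (G.deleteEdges {e}) l i := by
  ext v w
  simp only [schemeGraph, deleteEdges_adj, Set.mem_setOf_eq, List.take_succ_cons,
    List.mem_cons, Set.mem_singleton_iff]
  tauto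

lemma levelGraph_eq_self {i : ℕ} (h : ∀ e ∈ H.edgeSet, ¬ ω e < i) :
    levelGraph H ω i = H := by
  unfold levelGraph
  rw [deleteEdges_congr' H (t := ∅) (fun e he => by simpa using h e he)]
  exact deleteEdges_empty

lemma step_lemma (hdsm : DegreeSandwichMonotone 𝒢) (hω : IsWeighting G ω k)
    (hHG : H ≤ G) (hQ : ∀ j, 1 ≤ j → j ≤ k + 1 → 𝒢 (levelGraph H ω j))
    {e : Sym2 V} (hmin : Sym2DegreeMinimal H (minWeightEdges H ω) e) :
    ∀ j, 1 ≤ j → j ≤ k + 1 → 𝒢 (levelGraph (H.deleteEdges {e}) ω j) := by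
  obtain ⟨u, v, rfl, hdm⟩ := hmin
  have he : s(u, v) ∈ H.edgeSet := hdm.1.1
  have hemin : ∀ f ∈ H.edgeSet, ω s(u, v) ≤ ω f := hdm.1.2
  have hsubE : ∀ f ∈ H.edgeSet, f ∈ G.edgeSet :=
    fun f hf => edgeSet_subset_edgeSet.2 hHG hf
  have hbound : ∀ f ∈ H.edgeSet, 1 ≤ ω f ∧ ω f ≤ k := fun f hf => hω.1 f (hsubE f hf)
  set w := ω s(u, v) with hw
  have hw1 : 1 ≤ w := (hbound _ he).1
  have hwk : w ≤ k := (hbound _ he).2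
  have hGH : 𝒢 H := by
    have h1 := hQ 1 le_rfl (by omega)
    rwa [levelGraph_eq_self (fun f hf => by have := (hbound f hf).1; omega)] at h1
  have hGF : 𝒢 (H.deleteEdges (minWeightEdges H ω)) := by
    have h2 := hQ (w + 1) (by omega) (by omega)
    have heq : levelGraph H ω (w + 1) = H.deleteEdges (minWeightEdges H ω) := by
      apply deleteEdges_congr'
      intro f hf
      simp only [Set.mem_setOf_eq, minWeightEdges]
      constructor
      · intro hlt
        exact ⟨hf, fun g hg => by have := hemin g hg; omega⟩
      · intro hmem
        have := hmem.2 _ he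
        omega
    rwa [heq] at h2
  have hGe : 𝒢 (H.deleteEdges {s(u, v)}) :=
    hdsm H hGH (minWeightEdges H ω) (fun f hf => hf.1) hGF u v hdm
  intro j hj1 hjk
  by_cases hjw : j ≤ w
  · rw [levelGraph_eq_self]
    · exact hGe
    · intro f hf
      have hf' : f ∈ H.edgeSet := by
        rw [edgeSet_deleteEdges] at hf
        exact hf.1
      have := hemin f hf'
      omega
  · have heq : levelGraph (H.deleteEdges {s(u, v)}) ω j = levelGraph H ω j := by
      ext x y
      simp only [levelGraph, deleteEdges_adj, Set.mem_setOf_eq, Set.mem_singleton_iff]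
      constructor
      · rintro ⟨⟨ha, _⟩, hlt⟩
        exact ⟨ha, hlt⟩
      · rintro ⟨ha, hlt⟩
        refine ⟨⟨ha, fun hxy => ?_⟩, hlt⟩
        rw [hxy] at hlt
        omega
    rw [heq]
    exact hQ j hj1 hjk

lemma exists_degmin_edge [Fintype V] (H : SimpleGraph V) (ω : Sym2 V → ℕ)
    (hne : H.edgeSet.Nonempty) :
    ∃ e, Sym2DegreeMinimal H (minWeightEdges H ω) e := by
  obtain ⟨e0, he0, hmin0⟩ := Set.exists_min_image H.edgeSet ω (Set.toFinite _) hne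
  have hF0 : e0 ∈ minWeightEdges H ω := ⟨he0, hmin0⟩
  obtain ⟨⟨a, b⟩, rfl⟩ := Quot.exists_rep e0
  have hab : s(a, b) ∈ minWeightEdges H ω := hF0
  set U : Set V := {x : V | ∃ y, s(x, y) ∈ minWeightEdges H ω} with hU
  obtain ⟨u, hu, humin⟩ := Set.exists_min_image U (deg H) (Set.toFinite _) ⟨a, b, hab⟩
  obtain ⟨y0, hy0⟩ := hu
  obtain ⟨v, hv, hvmin⟩ := Set.exists_min_image {z : V | s(u, z) ∈ minWeightEdges H ω}
    (deg H) (Set.toFinite _) ⟨y0, hy0⟩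
  exact ⟨s(u, v), u, v, rfl, hv, fun x y hxy => humin x ⟨y, hxy⟩, fun z hz => hvmin z hz⟩

lemma exists_scheme [Fintype V] (ω : Sym2 V → ℕ) :
    ∀ (n : ℕ) (H : SimpleGraph V), H.edgeSet.ncard ≤ n → ∃ l, IsDegMinScheme H ω l := by
  intro n
  induction n with
  | zero =>
    intro H hcard
    have hemp : H.edgeSet = ∅ :=
      (Set.ncard_eq_zero (Set.toFinite _)).1 (Nat.le_zero.1 hcard)
    refine ⟨[], ⟨List.nodup_nil, fun e => by simp [hemp]⟩, fun i h => by simp at h⟩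
  | succ n ih =>
    intro H hcard
    by_cases hne : H.edgeSet.Nonempty
    · obtain ⟨e, hdm⟩ := exists_degmin_edge H ω hne
      have heH : e ∈ H.edgeSet := by
        obtain ⟨u, v, rfl, hd⟩ := hdm
        exact hd.1.1
      have hES : (H.deleteEdges {e}).edgeSet = H.edgeSet \ {e} := edgeSet_deleteEdges _
      have hcard' : (H.deleteEdges {e}).edgeSet.ncard ≤ n := by
        rw [hES]
        have hfin : H.edgeSet.Finite := Set.toFinite _
        have := Set.ncard_diff_singleton_lt_of_mem heH hfin
        omega
      obtain ⟨l', hl'⟩ := ih (H.deleteEdges {e}) hcard'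
      refine ⟨e :: l', ⟨?_, ?_⟩, ?_⟩
      · refine List.nodup_cons.2 ⟨fun hm => ?_, hl'.1.1⟩
        have := (hl'.1.2 e).1 hm
        rw [hES] at this
        exact this.2 rfl
      · intro f
        rw [List.mem_cons, hl'.1.2 f, hES]
        constructor
        · rintro (rfl | hf)
          · exact heH
          · exact hf.1
        · intro hf
          by_cases hfe : f = e
          · exact Or.inl hfe
          · exact Or.inr ⟨hf, hfe⟩
      · intro i h
        match i with
        | 0 =>
          simpa [schemeGraph_zero] using hdm
        | (j + 1) =>
          have hj : j < l'.length := by simpa using h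
          have := hl'.2 j hj
          simpa [schemeGraph_cons] using this
    · have hemp : H.edgeSet = ∅ := Set.not_nonempty_iff_eq_empty.1 hne
      refine ⟨[], ⟨List.nodup_nil, fun e => by simp [hemp]⟩, fun i h => by simp at h⟩

lemma sorted_take_countP (ω : Sym2 V → ℕ) (i : ℕ) :
    ∀ l : List (Sym2 V), IsSorted ω l →
      ∀ f, f ∈ l.take (l.countP fun e => decide (ω e < i)) ↔ f ∈ l ∧ ω f < i := by
  intro l
  induction l with
  | nil => simp
  | cons a t ih =>
    intro hs f
    have hst : IsSorted ω t := hs.of_cons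
    by_cases ha : ω a < i
    · rw [List.countP_cons, if_pos (decide_eq_true ha), List.take_succ_cons,
        List.mem_cons, ih hst f, List.mem_cons]
      constructor
      · rintro (rfl | ⟨hm, hlt⟩)
        · exact ⟨Or.inl rfl, ha⟩
        · exact ⟨Or.inr hm, hlt⟩
      · rintro ⟨rfl | hm, hlt⟩
        · exact Or.inl rfl
        · exact Or.inr ⟨hm, hlt⟩
    · have hall : ∀ g ∈ t, ¬ ω g < i := by
        intro g hg hlt
        have := List.rel_of_pairwise_cons hs hg
        omega
      have hcz : (t.countP fun e => decide (ω e < i)) = 0 :=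
        List.countP_eq_zero.2 (fun g hg => by simpa using hall g hg)
      rw [List.countP_cons, if_neg (by simpa using ha), hcz]
      simp only [Nat.add_zero, List.take_zero, List.not_mem_nil, false_iff, List.mem_cons]
      rintro ⟨rfl | hm, hlt⟩
      · exact ha hlt
      · exact hall f hm hlt

end Aux

/-- Let `𝒢` be a grounded degree sandwich monotone graph class and `(G, ω)` a weighted
graph. Then `(G, ω)` is level-`𝒢` iff `G ∈ 𝒢` and every degree-minimal edge elimination
scheme of `(G, ω)` is a sorted `𝒢`-safe edge elimination scheme. -/
theorem stmt2 {V : Type*} [Fintype V] (𝒢 : SimpleGraph V → Prop) (hgr : Grounded 𝒢)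
    (hdsm : DegreeSandwichMonotone 𝒢) (G : SimpleGraph V) (ω : Sym2 V → ℕ) (k : ℕ)
    (hω : IsWeighting G ω k) :
    IsLevel 𝒢 G ω k ↔
      (𝒢 G ∧ ∀ l : List (Sym2 V), IsDegMinScheme G ω l →
        IsSorted ω l ∧ IsSafeScheme 𝒢 G l) := by
  constructor
  · -- forward
    intro hlevel
    have hW1 : ∀ f ∈ G.edgeSet, 1 ≤ ω f ∧ ω f ≤ k := hω.1
    have hG𝒢 : 𝒢 G := by
      have h1 := hlevel 1 le_rfl (by omega)
      rwa [levelGraph_eq_self (fun f hf => by have := (hW1 f hf).1; omega)] at h1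
    refine ⟨hG𝒢, fun l hl => ?_⟩
    obtain ⟨⟨hnodup, hmem⟩, hdm⟩ := hl
    -- key invariant
    have key : ∀ i, i ≤ l.length →
        (∀ j, 1 ≤ j → j ≤ k + 1 → 𝒢 (levelGraph (schemeGraph G l i) ω j)) ∧
          schemeGraph G l i ≤ G := by
      intro i
      induction i with
      | zero =>
        intro _
        rw [schemeGraph_zero]
        exact ⟨hlevel, le_rfl⟩
      | succ i ih =>
        intro h
        have hi : i < l.length := by omega
        obtain ⟨hQ, hle⟩ := ih (le_of_lt hi)
        rw [schemeGraph_succ G l hi]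
        exact ⟨step_lemma hdsm hω hle hQ (hdm i hi),
          le_trans (deleteEdges_le _) hle⟩
    have hsafe : IsSafeScheme 𝒢 G l := by
      refine ⟨⟨hnodup, hmem⟩, fun i h1 hlen => ?_⟩
      obtain ⟨hQ, hle⟩ := key i hlen
      have h1' := hQ 1 le_rfl (by omega)
      rwa [levelGraph_eq_self (fun f hf => by
        have := (hW1 f (edgeSet_subset_edgeSet.2 hle hf)).1
        omega)] at h1'
    refine ⟨?_, hsafe⟩
    -- sortedness
    rw [IsSorted, List.pairwise_iff_getElem]
    intro i j hi hj hij
    have hdmi := hdm i hi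
    obtain ⟨u, v, huv, hd⟩ := hdmi
    have hmini : l.get ⟨i, hi⟩ ∈ minWeightEdges (schemeGraph G l i) ω := by
      rw [huv]
      exact hd.1
    have hj_edge : l[j] ∈ (schemeGraph G l i).edgeSet := by
      rw [schemeGraph, edgeSet_deleteEdges]
      refine ⟨(hmem _).1 (List.getElem_mem hj), ?_⟩
      intro hmemtake
      obtain ⟨m, hm, hmeq⟩ := List.mem_iff_getElem.1 hmemtake
      have hmlen : m < l.length := lt_of_lt_of_le (lt_of_lt_of_le hm (by
        simp [List.length_take])) le_rfl
      rw [List.getElem_take] at hmeq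
      have heqidx : m = j := (hnodup.getElem_inj_iff).1 hmeq
      have : m < i := lt_of_lt_of_le hm (by simp [List.length_take])
      omega
    have := hmini.2 _ hj_edge
    simpa [List.get_eq_getElem] using this
  · -- backward
    rintro ⟨hG𝒢, hall⟩
    obtain ⟨l, hl⟩ := exists_scheme ω G.edgeSet.ncard G le_rfl
    obtain ⟨hsorted, hsafe⟩ := hall l hl
    intro i hi1 hik
    set m := l.countP (fun e => decide (ω e < i)) with hm
    have hml : m ≤ l.length := List.countP_le_length
    have hchar := sorted_take_countP ω i l hsorted
    have heq : levelGraph G ω i = schemeGraph G l m := by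
      apply deleteEdges_congr'
      intro f hf
      simp only [Set.mem_setOf_eq]
      rw [hchar f]
      have hfl : f ∈ l := (hl.1.2 f).2 hf
      tauto
    rw [heq]
    rcases Nat.eq_zero_or_pos m with h0 | hpos
    · rw [h0, schemeGraph_zero]
      exact hG𝒢
    · exact hsafe.2 m hpos hml
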